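/- arXiv:2404.17312 — 5 statements merged into one kernel-verified Lean document; each statement's English description precedes it below -/
import Mathlib

section
/- The polynomial p(z) = 1 - 2z^2 - ... - 2z^k - z^{k+1} - z^{k+2} has no root in the half-open interval (-1/√2, 0]. -/
lemma geom_aux (z : ℝ) : ∀ k : ℕ, 2 ≤ k →
    (1 - z) * ∑ i ∈ Finset.Icc 2 k, z ^ i = z ^ 2 - z ^ (k + 1) := by
  intro k hk
  induction k with
  | zero => omega
  | succ n ih =>
    rcases Nat.lt_or_ge n 2 with h | h
    · interval_cases n
      · omega
      · norm_num [Finset.Icc_self]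
        ring
    · rw [Finset.sum_Icc_succ_top (by omega), mul_add, ih h]
      ring

/-- p(z) = 1 - 2∑_{i=2}^{k} z^i - z^{k+1} - z^{k+2}
has no root in the half-open interval (-1/√2, 0]. -/
theorem stmt2 (k : ℕ) (hk : 2 ≤ k) :
    ∀ z ∈ Set.Ioc (-(1 / Real.sqrt 2)) (0 : ℝ),
      1 - 2 * ∑ i ∈ Finset.Icc 2 k, z ^ i - z ^ (k + 1) - z ^ (k + 2) ≠ 0 := by
  intro z hz hcontra
  obtain ⟨h1, h2⟩ := hz
  obtain ⟨t, ht⟩ : ∃ t : ℝ, t = -z := ⟨-z, rfl⟩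
  have ht0 : 0 ≤ t := by rw [ht]; linarith
  have hsqrt : (0:ℝ) < Real.sqrt 2 := by positivity
  have hs : t < 1 / Real.sqrt 2 := by rw [ht]; linarith
  have ht2 : 2 * t ^ 2 < 1 := by
    have h := pow_lt_pow_left₀ hs ht0 (n := 2) (by norm_num)
    have hsq : (1 / Real.sqrt 2) ^ 2 = 1 / 2 := by
      rw [div_pow, Real.sq_sqrt (by norm_num : (2:ℝ) ≥ 0)]
      norm_num
    rw [hsq] at h
    linarith
  have ht1 : t ≤ 1 := by nlinarith
  have key : (1 - z) * (1 - 2 * ∑ i ∈ Finset.Icc 2 k, z ^ i - z ^ (k + 1) - z ^ (k + 2))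
      = 1 - z - 2 * z ^ 2 + z ^ (k + 1) + z ^ (k + 3) := by
    have hg := geom_aux z k hk
    linear_combination (-2 : ℝ) * hg
  have h0 : 1 - z - 2 * z ^ 2 + z ^ (k + 1) + z ^ (k + 3) = 0 := by
    rw [← key, hcontra, mul_zero]
  have habs : ∀ n : ℕ, 3 ≤ n → -t ^ 3 ≤ z ^ n := by
    intro n hn
    have h1 : |z ^ n| = t ^ n := by
      rw [abs_pow, abs_of_nonpos h2, ← ht]
    have h2' : t ^ n ≤ t ^ 3 := pow_le_pow_of_le_one ht0 ht1 hn
    have := neg_abs_le (z ^ n)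
    rw [h1] at this
    linarith
  have hb1 : -t ^ 3 ≤ z ^ (k + 1) := habs (k + 1) (by omega)
  have hb2 : -t ^ 3 ≤ z ^ (k + 3) := habs (k + 3) (by omega)
  have hzt : z = -t := by rw [ht]; ring
  rw [hzt] at h0
  nlinarith [mul_nonneg ht0 (sq_nonneg t), sq_nonneg t, mul_nonneg (mul_nonneg ht0 ht0) ht0]
end

section
/- Let ρ be the root of p(z) = 1 - 2z^2 - ... - 2z^k - z^{k+1} - z^{k+2} in (0, 1/√2) and let μ be the root of q(z) = 1 - 2z^2 - ... - 2z^{k+1} in (0, 1/√2). Then μ < ρ. -/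
/-- if ρ ∈ (0,1/√2) is a root of
p(z) = 1 - 2∑_{i=2}^{k} z^i - z^{k+1} - z^{k+2} and μ ∈ (0,1/√2) a root of
q(z) = 1 - 2∑_{i=2}^{k+1} z^i, then μ < ρ. -/
theorem stmt4 (k : ℕ) (hk : 2 ≤ k) (ρ μ : ℝ)
    (hρ : ρ ∈ Set.Ioo (0 : ℝ) (1 / Real.sqrt 2))
    (hμ : μ ∈ Set.Ioo (0 : ℝ) (1 / Real.sqrt 2))
    (hpρ : 1 - 2 * ∑ i ∈ Finset.Icc 2 k, ρ ^ i - ρ ^ (k + 1) - ρ ^ (k + 2) = 0)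
    (hqμ : 1 - 2 * ∑ i ∈ Finset.Icc 2 (k + 1), μ ^ i = 0) :
    μ < ρ := by
  obtain ⟨hρ0, hρ1⟩ := hρ
  obtain ⟨hμ0, hμ1⟩ := hμ
  have hs2 : Real.sqrt 2 > 1 := by
    have : (1:ℝ) < 2 := by norm_num
    nlinarith [Real.sq_sqrt (by norm_num : (2:ℝ) ≥ 0), Real.sqrt_nonneg 2]
  have hμlt1 : μ < 1 := lt_trans hμ1 (by rw [div_lt_one (by linarith)]; linarith)
  -- split the q-sum
  have hsplit : ∑ i ∈ Finset.Icc 2 (k + 1), μ ^ i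
      = (∑ i ∈ Finset.Icc 2 k, μ ^ i) + μ ^ (k + 1) := by
    rw [← Finset.sum_Icc_succ_top (by omega : 2 ≤ k + 1)]
  have hpμ : 1 - 2 * ∑ i ∈ Finset.Icc 2 k, μ ^ i - μ ^ (k + 1) - μ ^ (k + 2)
      = μ ^ (k + 1) - μ ^ (k + 2) := by
    rw [hsplit] at hqμ; ring_nf; ring_nf at hqμ; linarith
  have hpos : (0:ℝ) < μ ^ (k + 1) - μ ^ (k + 2) := by
    have h1 : μ ^ (k + 2) = μ ^ (k + 1) * μ := by ring
    have h2 : (0:ℝ) < μ ^ (k + 1) := pow_pos hμ0 _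
    nlinarith
  by_contra h
  push_neg at h
  have hsum : ∑ i ∈ Finset.Icc 2 k, ρ ^ i ≤ ∑ i ∈ Finset.Icc 2 k, μ ^ i :=
    Finset.sum_le_sum fun i _ => pow_le_pow_left₀ (le_of_lt hρ0) h i
  have h1 : ρ ^ (k + 1) ≤ μ ^ (k + 1) := pow_le_pow_left₀ (le_of_lt hρ0) h _
  have h2 : ρ ^ (k + 2) ≤ μ ^ (k + 2) := pow_le_pow_left₀ (le_of_lt hρ0) h _
  linarith [hpμ, hpos, hpρ]
end

section
/- Let ρ₁ ∈ (0, 1/√2) be a root of p₁(z) = 1 - z - 2z^2(1 + z + ... + z^{2k-2}) and ρ₃ ∈ (0, 1/2) a root of p₃(z) = 1 - z - 4z^2(1 + z + ... + z^{k-2}). Then ρ₃ < ρ₁. -/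
/-- if ρ₁ ∈ (0,1/√2) is a root of
p₁(z) = 1 - z - 2z²∑_{i=0}^{2k-2} z^i and ρ₃ ∈ (0,1/2) is a root of
p₃(z) = 1 - z - 4z²∑_{i=0}^{k-2} z^i, then ρ₃ < ρ₁. -/
theorem stmt5 (k : ℕ) (hk : 2 ≤ k) (ρ₁ ρ₃ : ℝ)
    (hρ₁ : ρ₁ ∈ Set.Ioo (0 : ℝ) (1 / Real.sqrt 2))
    (hρ₃ : ρ₃ ∈ Set.Ioo (0 : ℝ) (1 / 2))
    (h1 : 1 - ρ₁ - 2 * ρ₁ ^ 2 * ∑ i ∈ Finset.range (2 * k - 1), ρ₁ ^ i = 0)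
    (h3 : 1 - ρ₃ - 4 * ρ₃ ^ 2 * ∑ i ∈ Finset.range (k - 1), ρ₃ ^ i = 0) :
    ρ₃ < ρ₁ := by
  obtain ⟨h3pos, h3lt⟩ := hρ₃
  obtain ⟨h1pos, _⟩ := hρ₁
  by_contra hle
  push_neg at hle
  set S := ∑ i ∈ Finset.range (k - 1), ρ₃ ^ i with hSdef
  set Sk := ∑ j ∈ Finset.range k, ρ₃ ^ j with hSkdef
  have hsplit : ∑ i ∈ Finset.range (2 * k - 1), ρ₃ ^ i
      = S + ρ₃ ^ (k - 1) * Sk := by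
    have h2 : 2 * k - 1 = (k - 1) + k := by omega
    rw [h2, Finset.sum_range_add, hSdef, hSkdef, Finset.mul_sum]
    congr 1
    exact Finset.sum_congr rfl fun j _ => pow_add ρ₃ (k - 1) j
  have hS1 : 1 ≤ S := by
    have := Finset.single_le_sum (f := fun i => ρ₃ ^ i)
      (fun i _ => pow_nonneg h3pos.le i) (Finset.mem_range.mpr (by omega : 0 < k - 1))
    simpa using this
  have hSkpos : 0 < Sk := by
    apply Finset.sum_pos (fun i _ => pow_pos h3pos i)
    exact ⟨0, Finset.mem_range.mpr (by omega)⟩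
  have hgeom : Sk * (ρ₃ - 1) = ρ₃ ^ k - 1 := geom_sum_mul ρ₃ k
  have hpowk : (0:ℝ) < ρ₃ ^ k := pow_pos h3pos k
  have hSk2 : Sk < 2 := by nlinarith
  have hpow : ρ₃ ^ (k - 1) ≤ ρ₃ :=
    pow_le_of_le_one h3pos.le (by linarith) (by omega)
  have hpownn : (0:ℝ) < ρ₃ ^ (k - 1) := pow_pos h3pos _
  have htail : ρ₃ ^ (k - 1) * Sk < 1 := by nlinarith
  -- p₁(ρ₃) > 0
  have hp1ρ3 : 0 < 1 - ρ₃ - 2 * ρ₃ ^ 2 * ∑ i ∈ Finset.range (2 * k - 1), ρ₃ ^ i := by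
    rw [hsplit]
    nlinarith [sq_nonneg ρ₃, mul_pos (mul_pos h3pos h3pos) (lt_of_lt_of_le one_pos hS1)]
  -- monotonicity
  have hsum : ∑ i ∈ Finset.range (2 * k - 1), ρ₁ ^ i
      ≤ ∑ i ∈ Finset.range (2 * k - 1), ρ₃ ^ i :=
    Finset.sum_le_sum fun i _ => pow_le_pow_left₀ h1pos.le hle i
  have hsumpos : 0 ≤ ∑ i ∈ Finset.range (2 * k - 1), ρ₁ ^ i :=
    Finset.sum_nonneg fun i _ => pow_nonneg h1pos.le i
  nlinarith [sq_nonneg (ρ₃ - ρ₁), mul_le_mul_of_nonneg_left hsum (by positivity : (0:ℝ) ≤ 2 * ρ₃ ^ 2),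
    mul_le_mul_of_nonneg_right (by nlinarith : 2 * ρ₁ ^ 2 ≤ 2 * ρ₃ ^ 2) hsumpos]
end

section
/- For each j with k ≤ j ≤ 2k-1 let μ_j be the smallest positive root of p_j(z) = 1 - z - 2z(2z + 2z^2 + ... + 2z^{2k-j-1} + z^{2k-j} + ... + z^j). Then μ_j ≥ μ_k for all such j; i.e. the positive root is minimal when j = k. -/
/-- The polynomial p_j(z) = 1 - z - 2z(2∑_{i=1}^{2k-j-1} z^i + ∑_{i=2k-j}^{j} z^i). -/
noncomputable def pJ (k j : ℕ) (z : ℝ) : ℝ :=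
  1 - z - 2 * z * (2 * ∑ i ∈ Finset.Icc 1 (2 * k - j - 1), z ^ i
                    + ∑ i ∈ Finset.Icc (2 * k - j) j, z ^ i)

lemma pJ_continuous (k j : ℕ) : Continuous (pJ k j) := by
  unfold pJ; continuity

lemma pJ_zero (k j : ℕ) : pJ k j 0 = 1 := by
  unfold pJ
  have h1 : ∀ n : ℕ, ∑ i ∈ Finset.Icc 1 n, (0:ℝ) ^ i = 0 := by
    intro n
    apply Finset.sum_eq_zero
    intro i hi
    simp only [Finset.mem_Icc] at hi
    exact zero_pow (by omega)
  rw [h1]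
  ring

lemma pJ_half_neg (k j : ℕ) (hk : 2 ≤ k) (hkj : k ≤ j) (hj : j ≤ 2 * k - 1) :
    pJ k j (1/2) < 0 := by
  unfold pJ
  have hA : (0:ℝ) ≤ ∑ i ∈ Finset.Icc 1 (2 * k - j - 1), (1/2:ℝ) ^ i :=
    Finset.sum_nonneg fun i _ => by positivity
  have hu : Finset.Icc 1 (2*k-j-1) = Finset.Ioc 0 (2*k-j-1) := by
    rw [← Finset.Icc_add_one_left_eq_Ioc]; rfl
  have hv : Finset.Icc (2*k-j) j = Finset.Ioc (2*k-j-1) j := by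
    rw [← Finset.Icc_add_one_left_eq_Ioc]; congr 1; omega
  have hsum : ∑ i ∈ Finset.Icc 1 (2 * k - j - 1), (1/2:ℝ) ^ i
      + ∑ i ∈ Finset.Icc (2 * k - j) j, (1/2:ℝ) ^ i
      = ∑ i ∈ Finset.Icc 1 j, (1/2:ℝ) ^ i := by
    rw [hu, hv, Finset.sum_Ioc_consecutive _ (by omega) (by omega), ← Finset.Icc_add_one_left_eq_Ioc]; rfl
  have hbig : (3/4:ℝ) ≤ ∑ i ∈ Finset.Icc 1 j, (1/2:ℝ) ^ i := by
    have hsub : Finset.Icc 1 2 ⊆ Finset.Icc 1 j := Finset.Icc_subset_Icc_right (by omega)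
    have := Finset.sum_le_sum_of_subset_of_nonneg hsub
      (fun i _ _ => by positivity : ∀ i ∈ Finset.Icc 1 j, i ∉ Finset.Icc 1 2 → (0:ℝ) ≤ (1/2:ℝ)^i)
    calc (3/4:ℝ) = ∑ i ∈ Finset.Icc 1 2, (1/2:ℝ) ^ i := by norm_num [Finset.sum_Icc_succ_top]
    _ ≤ _ := this
  nlinarith [hsum, hbig, hA]

/-- key monotonicity: for 0 ≤ z ≤ 1, pJ k k z ≤ pJ k j z. -/
lemma pJ_mono (k j : ℕ) (hk : 2 ≤ k) (hkj : k ≤ j) (hj : j ≤ 2 * k - 1)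
    (z : ℝ) (hz0 : 0 ≤ z) (hz1 : z ≤ 1) : pJ k k z ≤ pJ k j z := by
  unfold pJ
  have hkk : 2 * k - k = k := by omega
  have hkk1 : 2 * k - k - 1 = k - 1 := by omega
  rw [hkk]
  -- reduce to bracket inequality
  have key : 2 * ∑ i ∈ Finset.Icc 1 (2 * k - j - 1), z ^ i
      + ∑ i ∈ Finset.Icc (2 * k - j) j, z ^ i
      ≤ 2 * ∑ i ∈ Finset.Icc 1 (k - 1), z ^ i + ∑ i ∈ Finset.Icc k k, z ^ i := by
    have e1 : Finset.Icc 1 (2*k-j-1) = Finset.Ioc 0 (2*k-j-1) := by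
      rw [← Finset.Icc_add_one_left_eq_Ioc]; rfl
    have e2 : Finset.Icc (2*k-j) j = Finset.Ioc (2*k-j-1) j := by
      rw [← Finset.Icc_add_one_left_eq_Ioc]; congr 1; omega
    have e3 : Finset.Icc 1 (k-1) = Finset.Ioc 0 (k-1) := by
      rw [← Finset.Icc_add_one_left_eq_Ioc]; rfl
    have e4 : Finset.Icc k k = Finset.Ioc (k-1) k := by
      rw [← Finset.Icc_add_one_left_eq_Ioc]; congr 1; omega
    rw [e1, e2, e3, e4]
    -- split sums
    have s1 : ∑ i ∈ Finset.Ioc 0 (k-1), z ^ i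
        = ∑ i ∈ Finset.Ioc 0 (2*k-j-1), z ^ i + ∑ i ∈ Finset.Ioc (2*k-j-1) (k-1), z ^ i :=
      (Finset.sum_Ioc_consecutive _ (by omega) (by omega)).symm
    have s2 : ∑ i ∈ Finset.Ioc (2*k-j-1) j, z ^ i
        = (∑ i ∈ Finset.Ioc (2*k-j-1) (k-1), z ^ i + ∑ i ∈ Finset.Ioc (k-1) k, z ^ i)
          + ∑ i ∈ Finset.Ioc k j, z ^ i := by
      rw [Finset.sum_Ioc_consecutive _ (by omega) (by omega),
        Finset.sum_Ioc_consecutive _ (by omega) (by omega)]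
    rw [s1, s2]
    have main : ∑ i ∈ Finset.Ioc k j, z ^ i ≤ ∑ i ∈ Finset.Ioc (2*k-j-1) (k-1), z ^ i := by
      have r1 : Finset.Ioc k j = Finset.Ico (k+1) (j+1) := by
        ext i; simp [Finset.mem_Ioc, Finset.mem_Ico]
      have r2 : Finset.Ioc (2*k-j-1) (k-1) = Finset.Ico (2*k-j) k := by
        ext i; simp [Finset.mem_Ioc, Finset.mem_Ico]; omega
      rw [r1, r2, Finset.sum_Ico_eq_sum_range, Finset.sum_Ico_eq_sum_range]
      have hn : j + 1 - (k + 1) = k - (2*k-j) := by omega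
      rw [hn]
      apply Finset.sum_le_sum
      intro i _
      exact pow_le_pow_of_le_one hz0 hz1 (by omega)
    linarith
  nlinarith [key, hz0]

/-- the smallest positive root μ_j of p_j satisfies μ_j ≥ μ_k,
for all k ≤ j ≤ 2k-1. -/
theorem stmt6 (k j : ℕ) (hk : 2 ≤ k) (hkj : k ≤ j) (hj : j ≤ 2 * k - 1)
    (μj μk : ℝ)
    (hμj : 0 < μj ∧ pJ k j μj = 0 ∧ ∀ z : ℝ, 0 < z → pJ k j z = 0 → μj ≤ z)
    (hμk : 0 < μk ∧ pJ k k μk = 0 ∧ ∀ z : ℝ, 0 < z → pJ k k z = 0 → μk ≤ z) :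
    μk ≤ μj := by
  obtain ⟨hμj0, hμjr, hμjm⟩ := hμj
  obtain ⟨hμk0, hμkr, hμkm⟩ := hμk
  -- μj < 1/2
  have hμj1 : μj < 1 := by
    have hmem : (0:ℝ) ∈ Set.Ioo (pJ k j (1/2)) (pJ k j 0) := by
      rw [pJ_zero]
      exact ⟨pJ_half_neg k j hk hkj hj, one_pos⟩
    obtain ⟨r, hr, hr0⟩ := intermediate_value_Ioo' (by norm_num : (0:ℝ) ≤ 1/2)
      (pJ_continuous k j).continuousOn hmem
    have := hμjm r hr.1 hr0
    linarith [hr.2]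
  -- pJ k k μj ≤ 0
  have hle : pJ k k μj ≤ 0 := by
    have := pJ_mono k j hk hkj hj μj hμj0.le hμj1.le
    linarith [hμjr ▸ this]
  rcases eq_or_lt_of_le hle with heq | hlt
  · exact hμkm μj hμj0 heq
  · have hmem : (0:ℝ) ∈ Set.Ioo (pJ k k μj) (pJ k k 0) := by
      rw [pJ_zero]; exact ⟨hlt, one_pos⟩
    obtain ⟨r, hr, hr0⟩ := intermediate_value_Ioo' hμj0.le
      (pJ_continuous k k).continuousOn hmem
    have := hμkm r hr.1 hr0
    linarith [hr.2]
end

section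
/- For m odd, the dihedral Artin group G(m) = ⟨a, b | (ab)^{(m-1)/2} a = (ba)^{(m-1)/2} b ⟩ is isomorphic to ⟨x, y | x^2 = y^m⟩, via x = the alternating word abab... of length m, and y = ab. -/
/-- The alternating product `altProd a b n = a b a b ⋯` of length `n`. -/
def altProd {G : Type*} [Monoid G] : G → G → ℕ → G
  | _, _, 0 => 1
  | a, b, n + 1 => a * altProd b a n

/-- The Artin relation π_m(a,b) = π_m(b,a) for the dihedral Artin group G(m);
`true` is the generator a and `false` is the generator b. -/
def artinRels (m : ℕ) : Set (FreeGroup Bool) :=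
  {altProd (FreeGroup.of true) (FreeGroup.of false) m *
    (altProd (FreeGroup.of false) (FreeGroup.of true) m)⁻¹}

/-- The single relation x² = yᵐ; `true` is x and `false` is y. -/
def oddRels (m : ℕ) : Set (FreeGroup Bool) :=
  {FreeGroup.of true ^ 2 * (FreeGroup.of false ^ m)⁻¹}

/-! ### Auxiliary lemmas -/

lemma map_altProd {M N : Type*} [Monoid M] [Monoid N] (f : M →* N) :
    ∀ (n : ℕ) (a b : M), f (altProd a b n) = altProd (f a) (f b) n
  | 0, _, _ => by simp [altProd]
  | n + 1, a, b => by rw [altProd, map_mul, map_altProd f n b a]; rfl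

lemma altProd_odd {G : Type*} [Monoid G] (a b : G) :
    ∀ k : ℕ, altProd a b (2 * k + 1) = (a * b) ^ k * a
  | 0 => by simp [altProd]
  | k + 1 => by
    have h : 2 * (k + 1) + 1 = (2 * k + 1) + 1 + 1 := by ring
    rw [h, altProd, altProd, altProd_odd a b k, pow_succ']
    simp [mul_assoc]

lemma altProd_eq {G : Type*} [Monoid G] (a b : G) (m k : ℕ) (h : m = 2 * k + 1) :
    altProd a b m = (a * b) ^ k * a := by subst h; exact altProd_odd a b k

lemma semiconj_pow {G : Type*} [Monoid G] (a b : G) (k : ℕ) :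
    a * (b * a) ^ k = (a * b) ^ k * a :=
  ((SemiconjBy.pow_right (by simp [mul_assoc, SemiconjBy] : SemiconjBy a (b * a) (a * b)) k))

lemma mk_rel_eq_one {α : Type*} (rels : Set (FreeGroup α)) {r : FreeGroup α} (hr : r ∈ rels) :
    PresentedGroup.mk rels r = 1 :=
  (QuotientGroup.eq_one_iff r).mpr (Subgroup.subset_normalClosure hr)

lemma artin_rel (m : ℕ) :
    altProd (PresentedGroup.of true : PresentedGroup (artinRels m)) (PresentedGroup.of false) m =
      altProd (PresentedGroup.of false) (PresentedGroup.of true) m := by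
  have h := mk_rel_eq_one (artinRels m) (show _ ∈ artinRels m from rfl)
  rw [map_mul, map_inv, map_altProd, map_altProd, mul_inv_eq_one] at h
  exact h

lemma odd_rel (m : ℕ) :
    (PresentedGroup.of true : PresentedGroup (oddRels m)) ^ 2 =
      (PresentedGroup.of false : PresentedGroup (oddRels m)) ^ m := by
  have h := mk_rel_eq_one (oddRels m) (show _ ∈ oddRels m from rfl)
  rw [map_mul, map_inv, map_pow, map_pow, mul_inv_eq_one] at h
  exact h

/-- π² = (ab)^(2k+1) given the Artin relation. -/
lemma pi_sq {G : Type*} [Group G] (a b : G) (k : ℕ)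
    (h : (a * b) ^ k * a = (b * a) ^ k * b) :
    ((a * b) ^ k * a) ^ 2 = (a * b) ^ (2 * k + 1) := by
  have hs := semiconj_pow a b k
  calc ((a * b) ^ k * a) ^ 2 = (a * b) ^ k * a * ((a * b) ^ k * a) := sq _
    _ = (a * b) ^ k * a * ((b * a) ^ k * b) := by rw [h]
    _ = (a * b) ^ k * (a * (b * a) ^ k) * b := by simp [mul_assoc]
    _ = (a * b) ^ k * ((a * b) ^ k * a) * b := by rw [hs]
    _ = (a * b) ^ (2 * k + 1) := by
        rw [show 2 * k + 1 = k + (k + 1) from by ring, pow_add, pow_succ]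
        simp [mul_assoc]

lemma conj_pow' {G : Type*} [Group G] (x y : G) :
    ∀ k : ℕ, (x⁻¹ * y * x) ^ k = x⁻¹ * y ^ k * x
  | 0 => by group
  | k + 1 => by rw [pow_succ, conj_pow' x y k, pow_succ]; group

/-- the images of the generators under the inverse map satisfy the Artin relation. -/
lemma inv_images_rel {G : Type*} [Group G] (x y : G) (k : ℕ)
    (h : x ^ 2 = y ^ (2 * k + 1)) :
    ((((y ^ k)⁻¹ * x) * (x⁻¹ * y ^ (k + 1))) ^ k * ((y ^ k)⁻¹ * x) = x) ∧
    (((x⁻¹ * y ^ (k + 1)) * ((y ^ k)⁻¹ * x)) ^ k * (x⁻¹ * y ^ (k + 1)) = x) := by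
  constructor
  · have hAB : ((y ^ k)⁻¹ * x) * (x⁻¹ * y ^ (k + 1)) = y := by group
    rw [hAB]; group
  · have hBA : (x⁻¹ * y ^ (k + 1)) * ((y ^ k)⁻¹ * x) = x⁻¹ * y * x := by group
    rw [hBA, conj_pow']
    calc x⁻¹ * y ^ k * x * (x⁻¹ * y ^ (k + 1)) = x⁻¹ * y ^ (2 * k + 1) := by
          rw [show 2 * k + 1 = k + (k + 1) by ring, pow_add]; group
      _ = x := by rw [← h]; group

/-- for m odd, G(m) = ⟨a,b | π_m(a,b) = π_m(b,a)⟩ is isomorphic to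
⟨x, y | x² = yᵐ⟩ via x ↦ π_m(a,b) and y ↦ ab. -/
theorem stmt9 (m : ℕ) (hm : 3 ≤ m) (hodd : Odd m) :
    ∃ φ : PresentedGroup (oddRels m) ≃* PresentedGroup (artinRels m),
      φ (PresentedGroup.of true) =
        altProd (PresentedGroup.of true) (PresentedGroup.of false) m ∧
      φ (PresentedGroup.of false) =
        PresentedGroup.of true * PresentedGroup.of false := by
  obtain ⟨k, hk0⟩ := hodd
  have hk : m = 2 * k + 1 := by omega
  have hart0 := artin_rel m
  rw [altProd_eq _ _ m k hk, altProd_eq _ _ m k hk] at hart0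
  have hoddr0 : (PresentedGroup.of true : PresentedGroup (oddRels m)) ^ 2 =
      (PresentedGroup.of false : PresentedGroup (oddRels m)) ^ (2 * k + 1) := by
    rw [← hk]; exact odd_rel m
  -- generators
  set a : PresentedGroup (artinRels m) := PresentedGroup.of true with ha
  set b : PresentedGroup (artinRels m) := PresentedGroup.of false with hb
  set x : PresentedGroup (oddRels m) := PresentedGroup.of true with hx
  set y : PresentedGroup (oddRels m) := PresentedGroup.of false with hy
  have hart : (a * b) ^ k * a = (b * a) ^ k * b := hart0
  have hoddr : x ^ 2 = y ^ (2 * k + 1) := hoddr0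
  -- forward map
  set f : Bool → PresentedGroup (artinRels m) :=
    fun t => bif t then (a * b) ^ k * a else a * b with hf
  have hfrels : ∀ r ∈ oddRels m, FreeGroup.lift f r = 1 := by
    intro r hr
    rw [show r = FreeGroup.of true ^ 2 * (FreeGroup.of false ^ m)⁻¹ from hr]
    rw [map_mul, map_inv, map_pow, map_pow, FreeGroup.lift_apply_of, FreeGroup.lift_apply_of]
    simp only [hf, cond_true, cond_false]
    rw [pi_sq a b k hart, ← hk, mul_inv_cancel]
  -- inverse map
  set g : Bool → PresentedGroup (oddRels m) :=
    fun t => bif t then (y ^ k)⁻¹ * x else x⁻¹ * y ^ (k + 1) with hg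
  obtain ⟨hABx, hBAx⟩ := inv_images_rel x y k hoddr
  have hgrels : ∀ r ∈ artinRels m, FreeGroup.lift g r = 1 := by
    intro r hr
    rw [show r = altProd (FreeGroup.of true) (FreeGroup.of false) m *
        (altProd (FreeGroup.of false) (FreeGroup.of true) m)⁻¹ from hr]
    rw [map_mul, map_inv, map_altProd, map_altProd, FreeGroup.lift_apply_of, FreeGroup.lift_apply_of]
    simp only [hg, cond_true, cond_false]
    rw [altProd_eq _ _ m k hk, altProd_eq _ _ m k hk, hABx, hBAx, mul_inv_cancel]
  set φh := PresentedGroup.toGroup hfrels with hφh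
  set ψh := PresentedGroup.toGroup hgrels with hψh
  have hφa : ∀ t, φh (PresentedGroup.of t) = f t := fun t => PresentedGroup.toGroup.of hfrels
  have hψa : ∀ t, ψh (PresentedGroup.of t) = g t := fun t => PresentedGroup.toGroup.of hgrels
  have hφx : φh x = f true := hφa true
  have hφy : φh y = f false := hφa false
  have hψa' : ψh a = g true := hψa true
  have hψb' : ψh b = g false := hψa false
  have h1 : ψh.comp φh = MonoidHom.id _ := by
    ext t
    cases t
    · -- y ↦ ab ↦ A*B = y
      simp only [MonoidHom.comp_apply, MonoidHom.id_apply, hφa, hf, cond_false, map_mul,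
        hψa true, hψa false, hg, cond_true, cond_false, ← hy, hφx, hφy, hψa', hψb']
      group
    · -- x ↦ (ab)^k a ↦ (AB)^k A = x
      simp only [MonoidHom.comp_apply, MonoidHom.id_apply, hφa, hf, cond_true, map_mul,
        map_pow, hψa true, hψa false, hg, cond_true, cond_false, ← hx, hφx, hφy, hψa', hψb']
      exact hABx
  have h2 : φh.comp ψh = MonoidHom.id _ := by
    ext t
    cases t
    · -- b ↦ x⁻¹ y^(k+1) ↦ ((ab)^k a)⁻¹ (ab)^(k+1) = b
      simp only [MonoidHom.comp_apply, MonoidHom.id_apply, hψa, hg, cond_false, map_mul,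
        map_inv, map_pow, hφa true, hφa false, hf, cond_true, cond_false, ← hb, hφx, hφy, hψa', hψb']
      group
    · -- a ↦ (y^k)⁻¹ x ↦ ((ab)^k)⁻¹ (ab)^k a = a
      simp only [MonoidHom.comp_apply, MonoidHom.id_apply, hψa, hg, cond_true, map_mul,
        map_inv, map_pow, hφa true, hφa false, hf, cond_true, cond_false, ← ha, hφx, hφy, hψa', hψb']
      group
  refine ⟨MonoidHom.toMulEquiv φh ψh h1 h2, ?_, ?_⟩
  · show φh (PresentedGroup.of true) = _
    rw [hφa]
    simp only [hf, cond_true]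
    rw [altProd_eq a b m k hk]
  · show φh (PresentedGroup.of false) = _
    rw [hφa]
    rfl
end
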